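/- Let n = 2r be an even positive integer and let s, s' be integers with 1 ≤ s, s' ≤ r − 1, s' ≠ s and s' ≠ r − s. Then the invariant subspaces V_s and V_{s'} are inequivalent: there is no ℂ-linear bijection φ : V_s → V_{s'} satisfying φ(λ_t u) = λ_t(φ(u)) for all t ∈ ZMod n and all u ∈ V_s. -/

import Mathlib

/-- The regular representation of the dihedral quandle `R_n = Quandle.dihedral n`
(`ZMod n` with `x ◃ y = 2y - x`) on functions `ZMod n → ℂ`:
`(λ_t f)(x) = f (2t - x)`. -/
def lam (n : ℕ) (t : ZMod n) (f : ZMod n → ℂ) : ZMod n → ℂ :=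
  fun x => f (2 * t - x)

/-- `ω = exp(2πi/n)`. -/
noncomputable def dihedralOmega (n : ℕ) : ℂ :=
  Complex.exp (2 * Real.pi * Complex.I / n)

/-- The character `f_s : ZMod n → ℂ`, `f_s(x) = ω^{s·x.val}`. -/
noncomputable def chi (n : ℕ) (s : ℤ) : ZMod n → ℂ :=
  fun x => dihedralOmega n ^ (s * (x.val : ℤ))

/-- `V_s`: the `ℂ`-linear span of `{f_s, f_{-s}}` in `ZMod n → ℂ`. -/
noncomputable def Vsub (n : ℕ) (s : ℤ) : Submodule ℂ (ZMod n → ℂ) :=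
  Submodule.span ℂ {chi n s, chi n (-s)}

/-!
Translation by `2` equals `λ_0 ∘ λ_1`, so every intertwiner `V_s → V_{s'}` commutes with it.
The character `f_u` is an eigenvector of this translation with eigenvalue `ω^{2u}`, so `f_s`
would have to be sent to an eigenvector of eigenvalue `ω^{2s}` inside `V_{s'}`, whose
eigenvalues are `ω^{±2s'}`. The assumptions on `s, s'` make these differ from `ω^{2s}`, so
`f_s` is sent to `0`, contradicting injectivity.
-/

section

variable {n : ℕ} [NeZero n]

lemma isPrimitiveRoot_dihedralOmega : IsPrimitiveRoot (dihedralOmega n) n := by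
  simpa [dihedralOmega] using Complex.isPrimitiveRoot_exp n (NeZero.ne n)

lemma dihedralOmega_zpow_eq_zpow_iff {j k : ℤ} :
    dihedralOmega n ^ j = dihedralOmega n ^ k ↔ (n : ℤ) ∣ j - k := by
  have h0 := isPrimitiveRoot_dihedralOmega.ne_zero (NeZero.ne n)
  rw [← isPrimitiveRoot_dihedralOmega.zpow_eq_one_iff_dvd, zpow_sub₀ h0,
    div_eq_one_iff_eq (zpow_ne_zero _ h0)]

lemma dihedralOmega_zpow_ne_zpow {j k : ℤ} (hjk : j ≠ k) (hlt : |j - k| < n) :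
    dihedralOmega n ^ j ≠ dihedralOmega n ^ k := by
  rw [Ne, dihedralOmega_zpow_eq_zpow_iff]
  exact fun h => sub_ne_zero.mpr hjk (Int.eq_zero_of_abs_lt_dvd h hlt)

lemma chi_intCast (u k : ℤ) : chi n u k = dihedralOmega n ^ (u * k) := by
  rw [chi, dihedralOmega_zpow_eq_zpow_iff, ← mul_sub]
  refine Dvd.dvd.mul_left ?_ u
  rw [← ZMod.intCast_zmod_eq_zero_iff_dvd]
  push_cast [ZMod.natCast_val, ZMod.cast_id]
  ring

lemma chi_add_two (u : ℤ) (x : ZMod n) :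
    chi n u (x + 2) = dihedralOmega n ^ (2 * u) * chi n u x := by
  have hx : x + 2 = ((x.val + 2 : ℤ) : ZMod n) := by push_cast [ZMod.natCast_zmod_val]; rfl
  have h0 := isPrimitiveRoot_dihedralOmega.ne_zero (NeZero.ne n)
  rw [hx, chi_intCast, chi, ← zpow_add₀ h0]
  ring_nf

lemma lam_chi (t : ZMod n) (u : ℤ) :
    lam n t (chi n u) = dihedralOmega n ^ (2 * u * t.val) • chi n (-u) := by
  funext x
  have hx : 2 * t - x = ((2 * t.val - x.val : ℤ) : ZMod n) := by
    push_cast [ZMod.natCast_zmod_val]; rfl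
  have h0 := isPrimitiveRoot_dihedralOmega.ne_zero (NeZero.ne n)
  rw [lam, hx, chi_intCast, Pi.smul_apply, smul_eq_mul, chi, ← zpow_add₀ h0]
  ring_nf

lemma lam_mem_Vsub (t : ZMod n) {u : ℤ} {f : ZMod n → ℂ} (hf : f ∈ Vsub n u) :
    lam n t f ∈ Vsub n u := by
  obtain ⟨a, b, rfl⟩ := Submodule.mem_span_pair.mp hf
  have hlam : lam n t (a • chi n u + b • chi n (-u))
      = a • lam n t (chi n u) + b • lam n t (chi n (-u)) := rfl
  rw [hlam, lam_chi, lam_chi, neg_neg, smul_smul, smul_smul]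
  exact add_mem (Submodule.smul_mem _ _ (Submodule.subset_span (by simp)))
    (Submodule.smul_mem _ _ (Submodule.subset_span (by simp)))

lemma linearIndependent_chi_neg {u : ℤ} (hu : dihedralOmega n ^ u ≠ dihedralOmega n ^ (-u)) :
    LinearIndependent ℂ ![chi n u, chi n (-u)] := by
  rw [LinearIndependent.pair_iff]
  intro a b h
  have h0 := congrFun h ((0 : ℤ) : ZMod n)
  have h1 := congrFun h ((1 : ℤ) : ZMod n)
  simp only [Pi.add_apply, Pi.smul_apply, smul_eq_mul, Pi.zero_apply, chi_intCast,
    mul_zero, mul_one, zpow_zero] at h0 h1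
  have ha : a * (dihedralOmega n ^ u - dihedralOmega n ^ (-u)) = 0 := by
    linear_combination h1 - dihedralOmega n ^ (-u) * h0
  have ha : a = 0 := (mul_eq_zero.mp ha).resolve_right (sub_ne_zero.mpr hu)
  exact ⟨ha, by linear_combination h0 - ha⟩

lemma eq_zero_of_mem_Vsub_of_add_two_eq_smul {u : ℤ}
    (hu : dihedralOmega n ^ u ≠ dihedralOmega n ^ (-u)) {c : ℂ}
    (hc : c ≠ dihedralOmega n ^ (2 * u)) (hc' : c ≠ dihedralOmega n ^ (2 * -u))
    {g : ZMod n → ℂ} (hg : g ∈ Vsub n u) (hshift : (fun x => g (x + 2)) = c • g) :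
    g = 0 := by
  obtain ⟨a, b, rfl⟩ := Submodule.mem_span_pair.mp hg
  have hcoef : (a * (dihedralOmega n ^ (2 * u) - c)) • chi n u
      + (b * (dihedralOmega n ^ (2 * -u) - c)) • chi n (-u) = 0 := by
    funext x
    have hx := congrFun hshift x
    simp only [Pi.add_apply, Pi.smul_apply, smul_eq_mul, chi_add_two] at hx
    simp only [Pi.add_apply, Pi.smul_apply, smul_eq_mul, Pi.zero_apply]
    linear_combination hx
  obtain ⟨ha, hb⟩ := LinearIndependent.pair_iff.mp (linearIndependent_chi_neg hu) _ _ hcoef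
  rw [(mul_eq_zero.mp ha).resolve_right (sub_ne_zero.mpr hc.symm),
    (mul_eq_zero.mp hb).resolve_right (sub_ne_zero.mpr hc'.symm)]
  simp

end

lemma lam_zero_lam_one {n : ℕ} (f : ZMod n → ℂ) :
    lam n 0 (lam n 1 f) = fun x => f (x + 2) := by
  funext x
  simp only [lam]
  ring_nf

lemma intertwiner_add_two_eq_smul {n : ℕ} {V W : Submodule ℂ (ZMod n → ℂ)}
    (hV : ∀ f ∈ V, lam n 1 f ∈ V) (φ : V →ₗ[ℂ] W)
    (hφ : ∀ (t : ZMod n) (u w : V), (w : ZMod n → ℂ) = lam n t ↑u →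
      ((φ w : W) : ZMod n → ℂ) = lam n t ↑(φ u))
    {u : V} {c : ℂ} (hu : (fun x => (u : ZMod n → ℂ) (x + 2)) = c • (u : ZMod n → ℂ)) :
    (fun x => (φ u : ZMod n → ℂ) (x + 2)) = c • (φ u : ZMod n → ℂ) := by
  let w : V := ⟨lam n 1 u, hV u u.2⟩
  calc (fun x => (φ u : ZMod n → ℂ) (x + 2))
      = lam n 0 (φ w) := by rw [← lam_zero_lam_one, hφ 1 u w rfl]
    _ = (φ (c • u) : ZMod n → ℂ) :=
      (hφ 0 w (c • u) (by simp [w, lam_zero_lam_one, hu])).symm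
    _ = c • (φ u : ZMod n → ℂ) := by simp

theorem Vs_inequivalent_even_general (n r : ℕ) (hn : n = 2 * r) (s s' : ℤ)
    (hs1 : 1 ≤ s) (hs2 : s ≤ (r : ℤ) - 1) (hs'1 : 1 ≤ s') (hs'2 : s' ≤ (r : ℤ) - 1)
    (hne : s' ≠ s) (hner : s' ≠ (r : ℤ) - s) :
    ¬ ∃ φ : ↥(Vsub n s) →ₗ[ℂ] ↥(Vsub n s'),
        Function.Bijective φ ∧
        ∀ (t : ZMod n) (u w : ↥(Vsub n s)),
          (w : ZMod n → ℂ) = lam n t ↑u →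
          ((φ w : ↥(Vsub n s')) : ZMod n → ℂ) = lam n t ↑(φ u) := by
  rintro ⟨φ, hφ, hcomm⟩
  have : NeZero n := ⟨by omega⟩
  have hsep : dihedralOmega n ^ s' ≠ dihedralOmega n ^ (-s') :=
    dihedralOmega_zpow_ne_zpow (by omega) (by rw [abs_lt]; omega)
  have hc : dihedralOmega n ^ (2 * s) ≠ dihedralOmega n ^ (2 * s') :=
    dihedralOmega_zpow_ne_zpow (by omega) (by rw [abs_lt]; omega)
  have hc' : dihedralOmega n ^ (2 * s) ≠ dihedralOmega n ^ (2 * -s') := by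
    -- the exponent `2 (r - s')` puts the difference `2 (s + s' - r)` inside `(-n, n)`
    rw [dihedralOmega_zpow_eq_zpow_iff.mpr (show (n : ℤ) ∣ 2 * -s' - 2 * (r - s') from
      ⟨-1, by omega⟩)]
    exact dihedralOmega_zpow_ne_zpow (by omega) (by rw [abs_lt]; omega)
  let f : Vsub n s := ⟨chi n s, Submodule.subset_span (by simp)⟩
  have hf : (fun x => (f : ZMod n → ℂ) (x + 2)) = dihedralOmega n ^ (2 * s) • f.1 :=
    funext fun x => chi_add_two s x
  have hφf : φ f = 0 := Subtype.ext <|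
    eq_zero_of_mem_Vsub_of_add_two_eq_smul hsep hc hc' (φ f).2 <|
    intertwiner_add_two_eq_smul (fun _ => lam_mem_Vsub 1) φ hcomm hf
  have hf0 : chi n s = 0 := congrArg Subtype.val (hφ.1 (hφf.trans (map_zero φ).symm))
  simpa [chi] using congrFun hf0 0

/-- For even `n = 2r > 0` and integers `1 ≤ s, s' ≤ r - 1` with `s' ≠ s` and
`s' ≠ r - s`, the invariant subspaces `V_s` and `V_{s'}` of the regular
representation of `R_n` are inequivalent: there is no `ℂ`-linear bijection
`φ : V_s → V_{s'}` intertwining all the operators `λ_t`. -/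
theorem Vs_inequivalent_even (n r : ℕ) (hn : n = 2 * r) (hpos : 0 < n) (s s' : ℤ)
    (hs1 : 1 ≤ s) (hs2 : s ≤ (r : ℤ) - 1) (hs'1 : 1 ≤ s') (hs'2 : s' ≤ (r : ℤ) - 1)
    (hne : s' ≠ s) (hner : s' ≠ (r : ℤ) - s) :
    ¬ ∃ φ : ↥(Vsub n s) →ₗ[ℂ] ↥(Vsub n s'),
        Function.Bijective φ ∧
        ∀ (t : ZMod n) (u w : ↥(Vsub n s)),
          (w : ZMod n → ℂ) = lam n t ↑u →
          ((φ w : ↥(Vsub n s')) : ZMod n → ℂ) = lam n t ↑(φ u) :=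
  Vs_inequivalent_even_general n r hn s s' hs1 hs2 hs'1 hs'2 hne hner
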